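/- arXiv:1803.08818 — 2 statements merged into one kernel-verified Lean document; each statement's English description precedes it below -/
import Mathlib

section
/- Let n ≥ 4 and 1 ≤ i ≤ n-2, and set m = n-i-1. Then ∑_{k=1}^{i} (q_{n-k,m}/2)·(r_{n-k,m} + i - k + 1)·d_{k,n}·(i-k)! = (q_{n,m}/2)·(r_{n,m} + i + 1)·i!, where q_{l,m} and r_{l,m} denote the quotient and remainder of l divided by m, and d_{k,n} = |D_{k,n}|. -/
/-- Vector of consecutive differences of a list. -/
def diffs (l : List ℕ) : List ℕ := List.zipWith (fun a b => b - a) l l.tail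

/-- Δ(X): consecutive differences of the increasing enumeration of a finite set. -/
def setDiffs (X : Finset ℕ) : List ℕ := diffs (X.sort (· ≤ ·))

/-- c̄(Δ) = {c, c+d₁, c+d₁+d₂, ...}. -/
def barSet (c : ℕ) (ds : List ℕ) : Finset ℕ :=
  ((List.range (ds.length + 1)).map (fun j => c + (ds.take j).sum)).toFinset

/-- A finite set (of cardinality ≥ 2) is periodic if its consecutive differences are constant. -/
def PeriodicSet (X : Finset ℕ) : Prop :=
  2 ≤ X.card ∧ ∃ d, 0 < d ∧ setDiffs X = List.replicate (X.card - 1) d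

/-- A vector is periodic if all its entries are equal to some positive d. -/
def PerVec (v : List ℕ) : Prop := ∃ d, 0 < d ∧ v = List.replicate v.length d

/-- Membership in D_{|u|,n}: injective word over [n], complement periodic,
no proper nonempty prefix has a periodic complement. -/
def MemD (n : ℕ) (u : List ℕ) : Prop :=
  u.Nodup ∧ (∀ x ∈ u, x ∈ Finset.Icc 1 n) ∧
  PeriodicSet (Finset.Icc 1 n \ u.toFinset) ∧
  ∀ j, 1 ≤ j → j < u.length → ¬ PeriodicSet (Finset.Icc 1 n \ (u.take j).toFinset)

/-- A list is a permutation word of [n]. -/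
def IsPermList (n : ℕ) (s : List ℕ) : Prop :=
  s.length = n ∧ s.Nodup ∧ s.toFinset = Finset.Icc 1 n

/-- s is the inverse permutation word of u (both permutations of [n]). -/
def InvPerm (n : ℕ) (u s : List ℕ) : Prop :=
  IsPermList n u ∧ IsPermList n s ∧
  ∀ j k, j < n → k < n → (u.getD j 0 = k + 1 ↔ s.getD k 0 = j + 1)

/-- Δ_i(s): consecutive differences of {s_i, ..., s_n} (1-indexed). -/
def deltaVec (s : List ℕ) (i : ℕ) : List ℕ := setDiffs (s.drop (i - 1)).toFinset

/-- One transition of a pyramidal sequence: merge two adjacent entries,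
or delete the leftmost, or delete the rightmost entry. -/
def PyrStep (v w : List ℕ) : Prop :=
  (∃ l a b r, v = l ++ a :: b :: r ∧ w = l ++ (a + b) :: r) ∨
  (∃ a r, v = a :: r ∧ w = r) ∨
  (∃ l a, v = l ++ [a] ∧ w = l)

/-- A pyramidal sequence of vectors of size n, encoded as a list [Δ₁, ..., Δ_{n-1}]. -/
def IsPyramidal (n : ℕ) (P : List (List ℕ)) : Prop :=
  P.length = n - 1 ∧ P.getD 0 [] = List.replicate (n - 1) 1 ∧
  ∀ i, i + 1 < n - 1 → PyrStep (P.getD i []) (P.getD (i + 1) [])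

/-- A trapezoidal sequence of height i of size n, encoded as [Δ₁, ..., Δ_{i+1}]:
Δ_{i+1} periodic, Δ_j not periodic for 2 ≤ j ≤ i. -/
def IsTrapezoidal (n i : ℕ) (T : List (List ℕ)) : Prop :=
  T.length = i + 1 ∧ T.getD 0 [] = List.replicate (n - 1) 1 ∧
  (∀ j, j < i → PyrStep (T.getD j []) (T.getD (j + 1) [])) ∧
  PerVec (T.getD i []) ∧
  ∀ j, 1 ≤ j → j < i → ¬ PerVec (T.getD j [])

/-- Non-interval permutation of [m]: no prefix of length l, 2 ≤ l < m, has as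
letter set an interval of consecutive integers. -/
def IsNonIntervalPerm (m : ℕ) (s : List ℕ) : Prop :=
  IsPermList m s ∧ ∀ l, 2 ≤ l → l < m → ¬ ∃ a, (s.take l).toFinset = Finset.Icc a (a + l - 1)

/-- v is obtained from u by a rigid shift of height h by k places to the left:
columns of height < h are untouched and receive nothing; each position of height ≥ h
receives the excess (over h) of the column k places to its right; every block strictly
above the cut lands on a column of height ≥ h. -/
def RigidShiftL (n h k : ℕ) (u v : List ℕ) : Prop :=
  IsPermList n u ∧ IsPermList n v ∧
  (∀ j, j < n → u.getD j 0 < h → v.getD j 0 = u.getD j 0) ∧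
  (∀ j, j < n → h ≤ u.getD j 0 → v.getD j 0 = h + (u.getD (j + k) 0 - h)) ∧
  (∀ j, j < n → h < u.getD j 0 → k ≤ j ∧ h ≤ u.getD (j - k) 0)

/-- Strong shift equivalence: finite sequences of rigid shifts (in either direction). -/
def StrongShiftEq (n : ℕ) (u v : List ℕ) : Prop :=
  Relation.ReflTransGen (fun a b => ∃ h k, RigidShiftL n h k a b ∨ RigidShiftL n h k b a) u v

/-- Shift equivalence: finite sequences of rigid shifts and reversals. -/
def ShiftEq (n : ℕ) (u v : List ℕ) : Prop :=
  Relation.ReflTransGen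
    (fun a b => (∃ h k, RigidShiftL n h k a b ∨ RigidShiftL n h k b a) ∨ b = a.reverse) u v

/-- Super-strong Wilf equivalence of permutation words of [n], characterized by
equality of all Δ_i of the inverses. -/
def SSWilf (n : ℕ) (u v : List ℕ) : Prop :=
  ∃ s t, InvPerm n u s ∧ InvPerm n v t ∧ ∀ i, 1 ≤ i → i ≤ n - 1 → deltaVec s i = deltaVec t i


/-!
The words counted on the left are those of length `i` over `[n]` with periodic complement,
sorted by the length `k` of their shortest prefix with periodic complement (a word of `D_{k,n}`).
For a periodic set `C` of size `N`, a word of length `t` over `C` with periodic complement is a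
periodic subset `Y ⊆ C` of size `m + 1 = N - t` together with an ordering of `C \ Y`. Since `C` is
an arithmetic progression, `Y` is given by its first index `a` and its step `e ≥ 1` inside `C`,
subject to `a + m e < N`; summing `N - m e` over `1 ≤ e ≤ N / m` gives `q (r + t + 1) / 2` with
`N = q m + r`. Applied to `C = [n]` and to `C = [n] \ u` for `u ∈ D_{k,n}` this yields both sides.
-/

section ArithmeticProgression

def apList (c d N : ℕ) : List ℕ := (List.range N).map (c + · * d)

def apSet (c d N : ℕ) : Finset ℕ := (apList c d N).toFinset

lemma apList_succ (c d N : ℕ) : apList c d (N + 1) = c :: apList (c + d) d N := by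
  simp only [apList, List.range_succ_eq_map, List.map_cons, List.map_map]
  congr 1
  · simp
  · exact List.map_congr_left fun t _ => by simp only [Function.comp, Nat.succ_eq_add_one]; ring

lemma length_apList (c d N : ℕ) : (apList c d N).length = N := by simp [apList]

lemma mem_apSet {x c d N : ℕ} : x ∈ apSet c d N ↔ ∃ t < N, x = c + t * d := by
  simp [apSet, apList, eq_comm]

lemma pairwise_lt_apList {d : ℕ} (hd : 0 < d) (c N : ℕ) : (apList c d N).Pairwise (· < ·) :=
  List.pairwise_lt_range.map _ fun _ _ h => by
    have := Nat.mul_lt_mul_of_pos_right h hd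
    omega

lemma sort_apSet {d : ℕ} (hd : 0 < d) (c N : ℕ) : (apSet c d N).sort (· ≤ ·) = apList c d N :=
  (List.toFinset_sort _ (pairwise_lt_apList hd c N).nodup).2
    ((pairwise_lt_apList hd c N).imp le_of_lt)

lemma card_apSet {d : ℕ} (hd : 0 < d) (c N : ℕ) : (apSet c d N).card = N := by
  rw [apSet, List.card_toFinset, (pairwise_lt_apList hd c N).nodup.dedup, length_apList]

lemma diffs_cons_cons (a b : ℕ) (l : List ℕ) : diffs (a :: b :: l) = (b - a) :: diffs (b :: l) :=
  rfl

lemma diffs_apList (c d N : ℕ) : diffs (apList c d N) = List.replicate (N - 1) d := by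
  induction N generalizing c with
  | zero => rfl
  | succ N ih =>
    cases N with
    | zero => rfl
    | succ N =>
      rw [apList_succ, apList_succ, diffs_cons_cons, ← apList_succ, ih]
      simp [List.replicate_succ]

lemma periodicSet_apSet {d N : ℕ} (hd : 0 < d) (hN : 2 ≤ N) (c : ℕ) : PeriodicSet (apSet c d N) :=
  ⟨(card_apSet hd c N).symm ▸ hN, d, hd, by
    rw [card_apSet hd, setDiffs, sort_apSet hd, diffs_apList]⟩

lemma eq_apList_of_diffs_eq_replicate {d : ℕ} {L : List ℕ} (hL : L.Pairwise (· ≤ ·))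
    (h : diffs L = List.replicate (L.length - 1) d) : L = apList (L.headD 0) d L.length := by
  induction L with
  | nil => rfl
  | cons a t ih =>
    cases t with
    | nil => simp [apList]
    | cons b t =>
      simp only [diffs_cons_cons, List.length_cons, Nat.add_sub_cancel, List.replicate_succ,
        List.cons.injEq] at h
      have hb : b = a + d := by
        have := (List.pairwise_cons.mp hL).1 b (by simp)
        omega
      have := ih (List.pairwise_cons.mp hL).2 (by simpa using h.2)
      rw [List.headD_cons, List.length_cons, apList_succ, ← hb]
      exact congrArg _ this

lemma periodicSet_iff {X : Finset ℕ} :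
    PeriodicSet X ↔ 2 ≤ X.card ∧ ∃ c d, 0 < d ∧ X = apSet c d X.card := by
  constructor
  · rintro ⟨hX, d, hd, hdiffs⟩
    refine ⟨hX, (X.sort (· ≤ ·)).headD 0, d, hd, ?_⟩
    have hL := eq_apList_of_diffs_eq_replicate (X.pairwise_sort (· ≤ ·))
      (by rwa [Finset.length_sort])
    rw [Finset.length_sort] at hL
    rw [apSet, ← hL, Finset.sort_toFinset]
  · rintro ⟨hX, c, d, hd, hXeq⟩
    exact hXeq ▸ periodicSet_apSet hd hX c

lemma eq_of_apSet_eq {c c' d d' N : ℕ} (hd : 0 < d) (hd' : 0 < d') (hN : 2 ≤ N)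
    (h : apSet c d N = apSet c' d' N) : c = c' ∧ d = d' := by
  obtain ⟨N, rfl⟩ : ∃ M, N = M + 2 := ⟨N - 2, by omega⟩
  have := congrArg (·.sort (· ≤ ·)) h
  simp only [sort_apSet hd, sort_apSet hd', apList_succ, List.cons.injEq] at this
  omega

end ArithmeticProgression

open Finset

section PeriodicSubsets

lemma two_mul_sum_Icc_add_sub_mul (m q r : ℕ) :
    2 * ∑ e ∈ Icc 1 q, (m * q + r - m * e) = q * (r + (m * q + r - m)) := by
  induction q generalizing r with
  | zero => simp
  | succ q ih =>
    rw [sum_Icc_succ_top (by omega), show m * (q + 1) + r = m * q + (r + m) by ring, mul_add,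
      ih, show m * q + (r + m) - m * (q + 1) = r by rw [mul_add]; omega,
      show m * q + (r + m) - m = m * q + r by omega]
    ring

lemma two_mul_sum_Icc_sub_mul (m N : ℕ) :
    2 * ∑ e ∈ Icc 1 (N / m), (N - m * e) = N / m * (N % m + (N - m)) := by
  have := two_mul_sum_Icc_add_sub_mul m (N / m) (N % m)
  rwa [Nat.div_add_mod] at this

variable {c d m N : ℕ}

open scoped Classical in
noncomputable def periodicSubsets (C : Finset ℕ) (s : ℕ) : Finset (Finset ℕ) :=
  {Y ∈ C.powerset | PeriodicSet Y ∧ #Y = s}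

lemma mem_periodicSubsets {C Y : Finset ℕ} {s : ℕ} :
    Y ∈ periodicSubsets C s ↔ Y ⊆ C ∧ PeriodicSet Y ∧ #Y = s := by
  simp [periodicSubsets]

lemma mem_periodicSubsets_apSet (hd : 0 < d) (hm : 1 ≤ m) {Y : Finset ℕ} :
    Y ∈ periodicSubsets (apSet c d N) (m + 1) ↔
      ∃ a e, 1 ≤ e ∧ a + m * e < N ∧ Y = apSet (c + a * d) (e * d) (m + 1) := by
  rw [mem_periodicSubsets]
  constructor
  · rintro ⟨hsub, hY, hcard⟩
    obtain ⟨-, c', d', hd', hYeq⟩ := periodicSet_iff.mp hY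
    rw [hcard] at hYeq
    have mem_Y : ∀ t ≤ m, c' + t * d' ∈ Y := fun t ht => by
      rw [hYeq, mem_apSet]
      exact ⟨t, by omega, rfl⟩
    obtain ⟨a, -, ha⟩ := mem_apSet.mp (hsub (by simpa using mem_Y 0 (Nat.zero_le _)))
    obtain ⟨b, -, hb⟩ := mem_apSet.mp (hsub (by simpa using mem_Y 1 hm))
    obtain ⟨j, hj, hj'⟩ := mem_apSet.mp (hsub (mem_Y m le_rfl))
    have hab : a < b := Nat.lt_of_mul_lt_mul_right (a := d) (by omega)
    have hd'eq : d' = (b - a) * d := by rw [Nat.sub_mul]; omega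
    refine ⟨a, b - a, by omega, ?_, by rw [hYeq, ha, hd'eq]⟩
    have : (a + m * (b - a)) * d = j * d := by
      rw [hd'eq, ha] at hj'
      linarith
    rw [Nat.eq_of_mul_eq_mul_right hd this]
    exact hj
  · rintro ⟨a, e, he, haN, rfl⟩
    have hed : 0 < e * d := Nat.mul_pos he hd
    refine ⟨fun x hx => ?_, periodicSet_apSet hed (by omega) _, card_apSet hed _ _⟩
    obtain ⟨t, ht, rfl⟩ := mem_apSet.mp hx
    refine mem_apSet.mpr ⟨a + t * e, ?_, by ring⟩
    nlinarith

lemma card_periodicSubsets_apSet (hd : 0 < d) (hm : 1 ≤ m) :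
    #(periodicSubsets (apSet c d N) (m + 1)) = ∑ e ∈ Icc 1 (N / m), (N - m * e) := by
  have mem_patterns : ∀ a e, (e ∈ Icc 1 (N / m) ∧ a ∈ range (N - m * e)) ↔
      (1 ≤ e ∧ a + m * e < N) := fun a e => by
    rw [mem_Icc, mem_range, Nat.le_div_iff_mul_le (by omega), mul_comm e]
    omega
  rw [show ∑ e ∈ Icc 1 (N / m), (N - m * e) = #((Icc 1 (N / m)).sigma fun e => range (N - m * e))
    by simp [card_sigma]]
  symm
  refine card_bij (fun p _ => apSet (c + p.2 * d) (p.1 * d) (m + 1)) ?_ ?_ ?_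
  · rintro ⟨e, a⟩ hp
    rw [mem_sigma, mem_patterns] at hp
    exact (mem_periodicSubsets_apSet hd hm).mpr ⟨a, e, hp.1, hp.2, rfl⟩
  · rintro ⟨e, a⟩ hp ⟨e', a'⟩ hp' h
    rw [mem_sigma, mem_patterns] at hp hp'
    obtain ⟨h₁, h₂⟩ := eq_of_apSet_eq (Nat.mul_pos hp.1 hd) (Nat.mul_pos hp'.1 hd) (by omega) h
    obtain rfl := Nat.eq_of_mul_eq_mul_right hd h₂
    obtain rfl := Nat.eq_of_mul_eq_mul_right hd (Nat.add_left_cancel h₁)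
    rfl
  · intro Y hY
    obtain ⟨a, e, he, haN, rfl⟩ := (mem_periodicSubsets_apSet hd hm).mp hY
    exact ⟨⟨e, a⟩, (mem_sigma.trans (mem_patterns a e)).mpr ⟨he, haN⟩, rfl⟩

lemma two_mul_card_periodicSubsets_apSet (hd : 0 < d) (hm : 1 ≤ m) :
    2 * #(periodicSubsets (apSet c d N) (m + 1)) = N / m * (N % m + (N - m)) := by
  rw [card_periodicSubsets_apSet hd hm, two_mul_sum_Icc_sub_mul]

end PeriodicSubsets

section Words

noncomputable def orderings (T : Finset ℕ) : Finset (List ℕ) :=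
  (T.sort (· ≤ ·)).permutations.toFinset

lemma mem_orderings {T : Finset ℕ} {v : List ℕ} : v ∈ orderings T ↔ v.Nodup ∧ v.toFinset = T := by
  rw [orderings, List.mem_toFinset, List.mem_permutations]
  constructor
  · intro h
    exact ⟨h.nodup_iff.mpr (T.sort_nodup _),
      (List.toFinset_eq_of_perm _ _ h).trans (T.sort_toFinset _)⟩
  · rintro ⟨hv, rfl⟩
    exact List.perm_of_nodup_nodup_toFinset_eq hv (sort_nodup _ _) (sort_toFinset _ _).symm

lemma card_orderings (T : Finset ℕ) : #(orderings T) = (#T).factorial := by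
  rw [orderings, List.card_toFinset, (List.nodup_permutations _ (T.sort_nodup _)).dedup,
    List.length_permutations, length_sort]

variable {C : Finset ℕ} {k t : ℕ} {u v : List ℕ}

noncomputable def periodicComplWords (C : Finset ℕ) (t : ℕ) : Finset (List ℕ) :=
  (periodicSubsets C (#C - t)).biUnion fun Y => orderings (C \ Y)

lemma mem_periodicComplWords :
    v ∈ periodicComplWords C t ↔
      v.Nodup ∧ v.toFinset ⊆ C ∧ v.length = t ∧ PeriodicSet (C \ v.toFinset) := by
  rw [periodicComplWords, mem_biUnion]
  constructor
  · rintro ⟨Y, hY, hv⟩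
    obtain ⟨hYC, hYper, hYcard⟩ := mem_periodicSubsets.mp hY
    obtain ⟨hnd, hvY⟩ := mem_orderings.mp hv
    refine ⟨hnd, hvY ▸ sdiff_subset, ?_, by rwa [hvY, Finset.sdiff_sdiff_eq_self hYC]⟩
    have := hYper.1
    rw [← List.toFinset_card_of_nodup hnd, hvY, card_sdiff_of_subset hYC]
    omega
  · rintro ⟨hnd, hvC, rfl, hper⟩
    refine ⟨C \ v.toFinset, mem_periodicSubsets.mpr ⟨sdiff_subset, hper, ?_⟩,
      mem_orderings.mpr ⟨hnd, (Finset.sdiff_sdiff_eq_self hvC).symm⟩⟩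
    rw [card_sdiff_of_subset hvC, List.toFinset_card_of_nodup hnd]

lemma card_periodicComplWords (ht : t ≤ #C) :
    #(periodicComplWords C t) = #(periodicSubsets C (#C - t)) * t.factorial := by
  rw [periodicComplWords, card_biUnion, sum_const_nat]
  · intro Y hY
    obtain ⟨hYC, -, hYcard⟩ := mem_periodicSubsets.mp hY
    rw [card_orderings, card_sdiff_of_subset hYC, hYcard, Nat.sub_sub_self ht]
  · intro Y hY Y' hY' hne
    refine disjoint_left.mpr fun v hv hv' => hne ?_
    rw [← Finset.sdiff_sdiff_eq_self (mem_periodicSubsets.mp hY).1,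
      ← Finset.sdiff_sdiff_eq_self (mem_periodicSubsets.mp hY').1,
      ← (mem_orderings.mp hv).2, (mem_orderings.mp hv').2]

/-- The formula for `p_{t,N}`, with `m = N - t - 1`. -/
lemma two_mul_card_periodicComplWords (hC : PeriodicSet C) (ht : t + 2 ≤ #C) :
    2 * #(periodicComplWords C t) =
      #C / (#C - t - 1) * (#C % (#C - t - 1) + t + 1) * t.factorial := by
  obtain ⟨-, c, d, hd, hCeq⟩ := periodicSet_iff.mp hC
  obtain ⟨m, hm⟩ : ∃ m, #C - t = m + 1 := ⟨#C - t - 1, by omega⟩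
  have key := two_mul_card_periodicSubsets_apSet (c := c) (N := #C) (m := m) hd (by omega)
  rw [← hCeq, show #C - m = t + 1 by omega] at key
  rw [card_periodicComplWords (by omega), ← mul_assoc, hm, key, add_assoc, Nat.add_sub_cancel]

lemma two_mul_card_periodicComplWords_sdiff (hu : u ∈ periodicComplWords C k)
    (ht : k + t + 2 ≤ #C) :
    2 * #(periodicComplWords (C \ u.toFinset) t) =
      (#C - k) / (#C - k - t - 1) * ((#C - k) % (#C - k - t - 1) + t + 1) * t.factorial := by
  obtain ⟨hnd, huC, hlen, hper⟩ := mem_periodicComplWords.mp hu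
  have hcard : #(C \ u.toFinset) = #C - k := by
    rw [card_sdiff_of_subset huC, List.toFinset_card_of_nodup hnd, hlen]
  rw [two_mul_card_periodicComplWords hper (by omega), hcard]

lemma append_mem_periodicComplWords_iff (hu : u.Nodup) (huC : u.toFinset ⊆ C) (hk : u.length = k)
    (hkt : k ≤ t) :
    u ++ v ∈ periodicComplWords C t ↔ v ∈ periodicComplWords (C \ u.toFinset) (t - k) := by
  simp only [mem_periodicComplWords, List.nodup_append', List.toFinset_append, union_subset_iff,
    subset_sdiff, List.length_append, sdiff_sdiff_left, sup_eq_union, hu, huC, true_and,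
    disjoint_comm (a := v.toFinset), List.disjoint_toFinset_iff_disjoint]
  constructor
  · rintro ⟨⟨hv, huv⟩, hvC, hlen, hper⟩
    exact ⟨hv, ⟨hvC, huv⟩, by omega, hper⟩
  · rintro ⟨hv, ⟨hvC, huv⟩, hlen, hper⟩
    exact ⟨⟨hv, huv⟩, hvC, by omega, hper⟩

end Words

section ShortestPeriodicPrefix

variable {C : Finset ℕ} {k k' t : ℕ} {u w : List ℕ}

open scoped Classical in
/-- The set `D_{k,n}`, with the alphabet `[n]` replaced by an arbitrary `C`. -/
noncomputable def minPeriodicComplWords (C : Finset ℕ) (k : ℕ) : Finset (List ℕ) :=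
  {u ∈ periodicComplWords C k | ∀ j, 1 ≤ j → j < k → ¬ PeriodicSet (C \ (u.take j).toFinset)}

lemma mem_minPeriodicComplWords :
    u ∈ minPeriodicComplWords C k ↔
      u ∈ periodicComplWords C k ∧ ∀ j, 1 ≤ j → j < k → ¬ PeriodicSet (C \ (u.take j).toFinset) :=
  by simp [minPeriodicComplWords]

lemma take_mem_periodicComplWords (hw : w ∈ periodicComplWords C t) (hkt : k ≤ t)
    (hk : PeriodicSet (C \ (w.take k).toFinset)) : w.take k ∈ periodicComplWords C k := by
  obtain ⟨hnd, hwC, hlen, -⟩ := mem_periodicComplWords.mp hw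
  refine mem_periodicComplWords.mpr ⟨(w.take_sublist k).nodup hnd, fun x hx => hwC ?_,
    by simp only [List.length_take]; omega, hk⟩
  simpa using (w.take_sublist k).subset (List.mem_toFinset.mp hx)

lemma exists_take_mem_minPeriodicComplWords (hw : w ∈ periodicComplWords C t) (ht : 1 ≤ t) :
    ∃ k ∈ Icc 1 t, w.take k ∈ minPeriodicComplWords C k := by
  classical
  have hw' := mem_periodicComplWords.mp hw
  have hex : ∃ k, 1 ≤ k ∧ PeriodicSet (C \ (w.take k).toFinset) :=
    ⟨t, ht, by rw [List.take_of_length_le hw'.2.2.1.le]; exact hw'.2.2.2⟩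
  obtain ⟨hk, hkper⟩ := Nat.find_spec hex
  have hkt : Nat.find hex ≤ t := Nat.find_min' hex ⟨ht, by
    rw [List.take_of_length_le hw'.2.2.1.le]; exact hw'.2.2.2⟩
  refine ⟨Nat.find hex, mem_Icc.mpr ⟨hk, hkt⟩, mem_minPeriodicComplWords.mpr
    ⟨take_mem_periodicComplWords hw hkt hkper, fun j hj hjk => ?_⟩⟩
  rw [List.take_take, min_eq_left hjk.le]
  exact fun hj' => Nat.find_min hex hjk ⟨hj, hj'⟩

lemma le_of_take_mem_minPeriodicComplWords (hk : 1 ≤ k)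
    (h : w.take k ∈ minPeriodicComplWords C k) (h' : w.take k' ∈ minPeriodicComplWords C k') :
    k' ≤ k := by
  by_contra! hlt
  have hper := (mem_periodicComplWords.mp (mem_minPeriodicComplWords.mp h).1).2.2.2
  have := (mem_minPeriodicComplWords.mp h').2 k hk hlt
  rw [List.take_take, min_eq_left hlt.le] at this
  exact this hper

lemma card_filter_take_eq (hu : u.Nodup) (huC : u.toFinset ⊆ C) (hk : u.length = k)
    (hkt : k ≤ t) :
    #{w ∈ periodicComplWords C t | w.take k = u} =
      #(periodicComplWords (C \ u.toFinset) (t - k)) := by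
  refine card_nbij' (·.drop k) (u ++ ·) (fun w hw => ?_) (fun v hv => ?_) (fun w hw => ?_)
    (fun v _ => List.drop_left' hk)
  · obtain ⟨hwF, rfl⟩ := mem_filter.mp (mem_coe.mp hw)
    rw [← List.take_append_drop k w] at hwF
    exact (append_mem_periodicComplWords_iff hu huC hk hkt).mp hwF
  · exact mem_filter.mpr ⟨(append_mem_periodicComplWords_iff hu huC hk hkt).mpr hv,
      List.take_left' hk⟩
  · obtain ⟨-, rfl⟩ := mem_filter.mp (mem_coe.mp hw)
    exact List.take_append_drop k w

lemma card_periodicComplWords_eq_sum (ht : 1 ≤ t) :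
    #(periodicComplWords C t) = ∑ k ∈ Icc 1 t, ∑ u ∈ minPeriodicComplWords C k,
      #(periodicComplWords (C \ u.toFinset) (t - k)) := by
  have hcover : periodicComplWords C t = (Icc 1 t).biUnion fun k =>
      {w ∈ periodicComplWords C t | w.take k ∈ minPeriodicComplWords C k} := by
    ext w
    simp only [mem_biUnion, mem_filter]
    constructor
    · intro hw
      obtain ⟨k, hk, hwk⟩ := exists_take_mem_minPeriodicComplWords hw ht
      exact ⟨k, hk, hw, hwk⟩
    · rintro ⟨-, -, hw, -⟩
      exact hw
  rw [hcover, card_biUnion]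
  · refine sum_congr rfl fun k hk => ?_
    refine (card_eq_sum_card_fiberwise (f := fun w : List ℕ => w.take k)
      fun w hw => (mem_filter.mp (mem_coe.mp hw)).2).trans (sum_congr rfl fun u hu => ?_)
    obtain ⟨hnd, huC, hlen, -⟩ := mem_periodicComplWords.mp (mem_minPeriodicComplWords.mp hu).1
    rw [filter_filter, ← card_filter_take_eq hnd huC hlen (mem_Icc.mp hk).2]
    congr 1
    refine filter_congr fun w _ => ?_
    constructor
    · exact And.right
    · rintro rfl
      exact ⟨hu, rfl⟩
  · intro k hk k' hk' hne
    refine disjoint_left.mpr fun w hw hw' => hne ?_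
    have h := (mem_filter.mp hw).2
    have h' := (mem_filter.mp hw').2
    exact le_antisymm (le_of_take_mem_minPeriodicComplWords (mem_Icc.mp hk').1 h' h)
      (le_of_take_mem_minPeriodicComplWords (mem_Icc.mp hk).1 h h')

end ShortestPeriodicPrefix

lemma mem_minPeriodicComplWords_Icc_iff {n k : ℕ} {u : List ℕ} :
    u ∈ minPeriodicComplWords (Icc 1 n) k ↔ u.length = k ∧ MemD n u := by
  rw [mem_minPeriodicComplWords, mem_periodicComplWords, MemD]
  constructor
  · rintro ⟨⟨hnd, hsub, rfl, hper⟩, hmin⟩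
    exact ⟨rfl, hnd, fun x hx => hsub (List.mem_toFinset.mpr hx), hper, hmin⟩
  · rintro ⟨rfl, hnd, hsub, hper, hmin⟩
    exact ⟨⟨hnd, fun x hx => hsub x (List.mem_toFinset.mp hx), rfl, hper⟩, hmin⟩

lemma natCard_memD (n k : ℕ) :
    Nat.card {u : List ℕ | u.length = k ∧ MemD n u} = #(minPeriodicComplWords (Icc 1 n) k) := by
  rw [← Set.ncard_coe_finset, ← Nat.card_coe_set_eq]
  congr
  ext u
  simp [mem_minPeriodicComplWords_Icc_iff]

lemma Icc_one_eq_apSet (n : ℕ) : Icc 1 n = apSet 1 1 n := by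
  ext x
  simp only [mem_Icc, mem_apSet, mul_one]
  exact ⟨fun h => ⟨x - 1, by omega, by omega⟩, by rintro ⟨t, ht, rfl⟩; omega⟩

theorem stmt6_general (n i : ℕ) (hi : 1 ≤ i) (hin : i ≤ n - 2) :
    ∑ k ∈ Finset.Icc 1 i,
        ((n - k) / (n - i - 1)) * ((n - k) % (n - i - 1) + (i - k) + 1) *
          Nat.card {u : List ℕ | u.length = k ∧ MemD n u} * Nat.factorial (i - k) =
      (n / (n - i - 1)) * (n % (n - i - 1) + i + 1) * Nat.factorial i := by
  have hIcc : PeriodicSet (Icc 1 n) := Icc_one_eq_apSet n ▸ periodicSet_apSet one_pos (by omega) 1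
  have hterm : ∀ k ∈ Icc 1 i,
      (n - k) / (n - i - 1) * ((n - k) % (n - i - 1) + (i - k) + 1) *
          Nat.card {u : List ℕ | u.length = k ∧ MemD n u} * (i - k).factorial =
        2 * ∑ u ∈ minPeriodicComplWords (Icc 1 n) k,
          #(periodicComplWords (Icc 1 n \ u.toFinset) (i - k)) := by
    intro k hk
    have hki := mem_Icc.mp hk
    rw [natCard_memD, mul_sum, sum_congr rfl fun u hu => two_mul_card_periodicComplWords_sdiff
        (mem_minPeriodicComplWords.mp hu).1 (by simp only [Nat.card_Icc]; omega),
      sum_const, smul_eq_mul, Nat.card_Icc, Nat.add_sub_cancel,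
      show n - k - (i - k) - 1 = n - i - 1 by omega]
    ring
  rw [sum_congr rfl hterm, ← mul_sum, ← card_periodicComplWords_eq_sum hi,
    two_mul_card_periodicComplWords hIcc (by simp only [Nat.card_Icc]; omega), Nat.card_Icc,
    Nat.add_sub_cancel]

theorem stmt6 (n i : ℕ) (hn : 4 ≤ n) (hi : 1 ≤ i) (hin : i ≤ n - 2) :
    ∑ k ∈ Finset.Icc 1 i,
        ((n - k) / (n - i - 1)) * ((n - k) % (n - i - 1) + (i - k) + 1) *
          Nat.card {u : List ℕ | u.length = k ∧ MemD n u} * Nat.factorial (i - k) =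
      (n / (n - i - 1)) * (n % (n - i - 1) + i + 1) * Nat.factorial i :=
  stmt6_general n i hi hin
end

section
/- There is a bijection between D_{k,n} and the set of non-interval permutations of length k+1, whenever k < ⌊n/2⌋. Consequently d_{k,n} = a_{k+1} for all k < ⌊n/2⌋, where a_m is the number of non-interval permutations of size m. -/
/-!
Since `k < n / 2`, every complement `[n] \ alph(u')` occurring here has more than half of the
elements of `[n]`, and a periodic subset of `[n]` that large must have difference `1`: periodic
means interval. So a word `u ∈ D_{k,n}` misses exactly an interval `[a, a + m]`, `m = n - k - 1`.
Collapsing that block to the point `a` (the reduction `red`) maps the complement of the prefix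
`u₁ ⋯ u_j` onto the letter set of the suffix of length `k + 1 - j` of `red (u · a)`. The collapse
is monotone with a monotone section, hence preserves and reflects intervals, and the defining
conditions of `D_{k,n}` become the non-interval condition for the reversal of `red (u · a)`.
-/

lemma diffs_cons_cons_s8 (x y : ℕ) (t : List ℕ) : diffs (x :: y :: t) = (y - x) :: diffs (y :: t) :=
  rfl

lemma diffs_range' (a c d : ℕ) : diffs (List.range' a c d) = List.replicate (c - 1) d := by
  induction c generalizing a with
  | zero => rfl
  | succ c ih =>
    cases c with
    | zero => rfl
    | succ c =>
      rw [List.range'_succ, List.range'_succ, diffs_cons_cons_s8, ← List.range'_succ, ih]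
      simp [List.replicate_succ]

lemma eq_range'_of_diffs_eq_replicate {L : List ℕ} {d : ℕ} (hd : 0 < d)
    (h : diffs L = List.replicate (L.length - 1) d) :
    L = List.range' (L.headD 0) L.length d := by
  induction L with
  | nil => rfl
  | cons x t ih =>
    cases t with
    | nil => rfl
    | cons y t =>
      simp only [diffs_cons_cons_s8, List.length_cons, Nat.add_sub_cancel, List.replicate_succ,
        List.cons.injEq] at h
      have hy : y = x + d := by omega
      have ht := ih h.2
      rw [List.headD_cons] at ht
      rw [List.headD_cons, List.length_cons, List.range'_succ, ← hy, ← ht]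

open Finset

lemma sort_Ico_add (a c : ℕ) : (Ico a (a + c)).sort (· ≤ ·) = List.range' a c := by
  rw [← List.toFinset_range'_1, List.toFinset_sort _ List.nodup_range']
  exact List.pairwise_le_range' _

lemma ordConnected_coe_iff {X : Finset ℕ} :
    (X : Set ℕ).OrdConnected ↔ ∃ a, X = Icc a (a + #X - 1) := by
  refine ⟨fun h => ?_, fun ⟨a, ha⟩ => ha ▸ (coe_Icc a _).symm ▸ Set.ordConnected_Icc⟩
  rcases X.eq_empty_or_nonempty with rfl | hne
  · exact ⟨1, rfl⟩
  obtain ⟨a, b, hab, rfl⟩ : ∃ a b, a ≤ b ∧ X = Icc a b := by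
    refine ⟨X.min' hne, X.max' hne, min'_le _ _ (max'_mem _ _), Subset.antisymm
      (fun x hx => mem_Icc.2 ⟨min'_le X x hx, le_max' X x hx⟩) fun x hx => ?_⟩
    rw [← Finset.mem_coe]
    exact h.out (min'_mem X hne) (max'_mem X hne) (by simpa using hx)
  exact ⟨a, by rw [Nat.card_Icc]; congr 1; omega⟩

lemma periodicSet_iff_ordConnected {n : ℕ} {X : Finset ℕ} (hX : X ⊆ Icc 1 n)
    (hcard : n + 2 ≤ 2 * #X) : PeriodicSet X ↔ (X : Set ℕ).OrdConnected := by
  have hXn : #X ≤ n := by simpa using card_le_card hX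
  constructor
  · rintro ⟨-, d, hd, hdiffs⟩
    set L := X.sort (· ≤ ·) with hLdef
    have hL : L = List.range' (L.headD 0) #X d := by
      simpa [L] using
        eq_range'_of_diffs_eq_replicate hd (L := L) (by rw [length_sort]; exact hdiffs)
    set a := L.headD 0
    have hmem : ∀ i < #X, a + d * i ∈ X := fun i hi => by
      rw [← sort_toFinset X (· ≤ ·), List.mem_toFinset, ← hLdef, hL]
      exact List.mem_range'.2 ⟨i, hi, rfl⟩
    have hfirst := mem_Icc.1 (hX (hmem 0 (by omega)))
    have hlast := mem_Icc.1 (hX (hmem (#X - 1) (by omega)))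
    -- a step `d ≥ 2` would spread `X` over more than `2 (#X - 1) ≥ n` consecutive integers
    have hd1 : d = 1 := by
      by_contra
      have : 2 * (#X - 1) ≤ d * (#X - 1) := Nat.mul_le_mul_right _ (by omega)
      omega
    have hXIco : X = Ico a (a + #X) := by
      rw [← List.toFinset_range'_1, ← hd1, ← hL, hLdef, sort_toFinset]
    rw [hXIco, coe_Ico]
    exact Set.ordConnected_Ico
  · intro h
    obtain ⟨a, ha⟩ := ordConnected_coe_iff.1 h
    have hXIco : X = Ico a (a + #X) :=
      ha.trans (by ext x; simp only [mem_Icc, mem_Ico]; omega)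
    refine ⟨by omega, 1, one_pos, ?_⟩
    rw [setDiffs, hXIco, sort_Ico_add, diffs_range', ← hXIco]

lemma Set.ordConnected_preimage_iff_of_leftInverse {α β : Type*} [Preorder α] [Preorder β]
    {f : α → β} {g : β → α} (hf : Monotone f) (hg : Monotone g) (hfg : Function.LeftInverse f g)
    {s : Set β} : (f ⁻¹' s).OrdConnected ↔ s.OrdConnected := by
  refine ⟨fun h => ?_, fun h => h.preimage_mono hf⟩
  simpa [Set.preimage_preimage, hfg _] using h.preimage_mono hg

/-- Squeezes the block `[a, a + m]` to the point `a`. -/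
def collapse (a m y : ℕ) : ℕ := y - min (y - a) m

def expand (a m x : ℕ) : ℕ := if x < a then x else x + m

section Collapse

variable {a m : ℕ}

lemma collapse_mono : Monotone (collapse a m) := fun x y h => by
  unfold collapse; omega

lemma expand_mono : Monotone (expand a m) := fun x y h => by
  unfold expand; split_ifs <;> omega

lemma collapse_expand : Function.LeftInverse (collapse a m) (expand a m) := fun x => by
  unfold collapse expand; split_ifs <;> omega

lemma expand_injective : Function.Injective (expand a m) := collapse_expand.injective

lemma expand_eq_iff {x y : ℕ} (hx : x ≠ a) : expand a m x = y ↔ collapse a m y = x := by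
  unfold collapse expand; split_ifs <;> omega

lemma expand_collapse {y : ℕ} (hy : y < a ∨ a + m < y) : expand a m (collapse a m y) = y := by
  unfold collapse expand; split_ifs <;> omega

lemma mem_image_expand_iff {Q : Finset ℕ} (haQ : a ∉ Q) {y : ℕ} :
    y ∈ Q.image (expand a m) ↔ collapse a m y ∈ Q := by
  simp only [mem_image]
  exact ⟨fun ⟨x, hx, hxy⟩ => (expand_eq_iff (ne_of_mem_of_not_mem hx haQ)).1 hxy ▸ hx,
    fun h => ⟨_, h, (expand_eq_iff (ne_of_mem_of_not_mem h haQ)).2 rfl⟩⟩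

lemma coe_Icc_sdiff_image_expand {k : ℕ} (ha : a ∈ Icc 1 (k + 1)) {Q : Finset ℕ} (haQ : a ∉ Q) :
    (↑(Icc 1 (k + 1 + m) \ Q.image (expand a m)) : Set ℕ) =
      collapse a m ⁻¹' ↑(Icc 1 (k + 1) \ Q) := by
  ext y
  rw [mem_Icc] at ha
  simp only [coe_sdiff, coe_Icc, Set.mem_sdiff, Set.mem_Icc, mem_coe, Set.mem_preimage,
    mem_image_expand_iff haQ]
  unfold collapse
  constructor <;> rintro ⟨h, hQ⟩ <;> exact ⟨by omega, hQ⟩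

end Collapse

lemma List.toFinset_take_eq_sdiff {α : Type*} [DecidableEq α] {l : List α} (hl : l.Nodup)
    (i : ℕ) : (l.take i).toFinset = l.toFinset \ (l.drop i).toFinset := by
  ext x
  simp only [List.mem_toFinset, mem_sdiff]
  refine ⟨fun h => ⟨List.mem_of_mem_take h, List.disjoint_take_drop hl le_rfl h⟩, fun ⟨h, hd⟩ => ?_⟩
  rw [← List.take_append_drop i l, List.mem_append] at h
  exact h.resolve_right hd

/-- `blowUp m (a :: w)` is the word `u` with `red (u · a) = reverse (a :: w)`. -/
def blowUp (m : ℕ) : List ℕ → List ℕ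
  | [] => []
  | a :: w => w.reverse.map (expand a m)

lemma length_blowUp (m : ℕ) (s : List ℕ) : (blowUp m s).length = s.length - 1 := by
  cases s <;> simp [blowUp]

section BlowUp

variable {k m a : ℕ} {w : List ℕ}

lemma IsPermList.head_mem (hs : IsPermList (k + 1) (a :: w)) : a ∈ Icc 1 (k + 1) := by
  simp [← hs.2.2]

lemma IsPermList.head_not_mem_drop (hs : IsPermList (k + 1) (a :: w)) (i : ℕ) :
    a ∉ w.drop i :=
  fun h => (List.nodup_cons.1 hs.2.1).1 (List.mem_of_mem_drop h)

lemma coe_Icc_sdiff_take_blowUp (hs : IsPermList (k + 1) (a :: w)) {j : ℕ} (hj : j ≤ k) :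
    (↑(Icc 1 (k + 1 + m) \ ((blowUp m (a :: w)).take j).toFinset) : Set ℕ) =
      collapse a m ⁻¹' ↑((a :: w).take (k + 1 - j)).toFinset := by
  have hw : w.length = k := by simpa using hs.1
  have htake : ((blowUp m (a :: w)).take j).toFinset =
      (w.drop (k - j)).toFinset.image (expand a m) := by
    ext x
    simp [blowUp, List.take_reverse, hw, ← List.map_drop]
  have hdrop : (a :: w).drop (k + 1 - j) = w.drop (k - j) := by
    rw [show k + 1 - j = k - j + 1 by omega, List.drop_succ_cons]
  rw [htake, List.toFinset_take_eq_sdiff hs.2.1, hdrop, hs.2.2]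
  exact coe_Icc_sdiff_image_expand hs.head_mem (by simpa using hs.head_not_mem_drop (k - j))

lemma IsPermList.nodup_blowUp (hs : IsPermList (k + 1) (a :: w)) :
    (blowUp m (a :: w)).Nodup :=
  (List.nodup_reverse.2 (List.nodup_cons.1 hs.2.1).2).map expand_injective

lemma IsPermList.mem_Icc_of_mem_blowUp (hs : IsPermList (k + 1) (a :: w)) {y : ℕ}
    (hy : y ∈ blowUp m (a :: w)) : y ∈ Icc 1 (k + 1 + m) := by
  obtain ⟨x, hx, rfl⟩ := List.mem_map.1 hy
  have hx' : x ∈ Icc 1 (k + 1) :=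
    hs.2.2 ▸ List.mem_toFinset.2 (List.mem_cons_of_mem _ (List.mem_reverse.1 hx))
  rw [mem_Icc] at hx' ⊢
  unfold expand
  split_ifs <;> omega

lemma periodicSet_Icc_sdiff_take_blowUp_iff (hm : k + 1 ≤ m) (hs : IsPermList (k + 1) (a :: w))
    {j : ℕ} (hj : j ≤ k) :
    PeriodicSet (Icc 1 (k + 1 + m) \ ((blowUp m (a :: w)).take j).toFinset) ↔
      (↑((a :: w).take (k + 1 - j)).toFinset : Set ℕ).OrdConnected := by
  have hcard : k + 1 + m - j ≤ #(Icc 1 (k + 1 + m) \ ((blowUp m (a :: w)).take j).toFinset) := by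
    refine le_trans ?_ (le_card_sdiff _ _)
    have := (List.toFinset_card_le _).trans (List.length_take_le j (blowUp m (a :: w)))
    simp only [Nat.card_Icc]
    omega
  rw [periodicSet_iff_ordConnected sdiff_subset (by omega), coe_Icc_sdiff_take_blowUp hs hj,
    Set.ordConnected_preimage_iff_of_leftInverse collapse_mono expand_mono collapse_expand]

end BlowUp

lemma ordConnected_coe_toFinset_take_iff {s : List ℕ} (hs : s.Nodup) {l : ℕ}
    (hl : l ≤ s.length) :
    (↑(s.take l).toFinset : Set ℕ).OrdConnected ↔ ∃ α, (s.take l).toFinset = Icc α (α + l - 1) := by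
  rw [ordConnected_coe_iff, List.toFinset_card_of_nodup (hs.sublist (List.take_sublist _ _)),
    List.length_take, min_eq_left hl]

theorem memD_blowUp_iff {k m : ℕ} {s : List ℕ} (hm : k + 1 ≤ m) (hs : IsPermList (k + 1) s) :
    MemD (k + 1 + m) (blowUp m s) ↔ IsNonIntervalPerm (k + 1) s := by
  obtain ⟨a, w, rfl⟩ := List.exists_cons_of_length_eq_add_one hs.1
  have hlen : (blowUp m (a :: w)).length = k := by simp [length_blowUp, hs.1]
  have hperiodic := fun j (hj : j ≤ k) => periodicSet_Icc_sdiff_take_blowUp_iff hm hs hj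
  have hinterval := fun l (hl : l ≤ k + 1) =>
    ordConnected_coe_toFinset_take_iff hs.2.1 (l := l) (by rw [hs.1]; exact hl)
  have hfull : PeriodicSet (Icc 1 (k + 1 + m) \ (blowUp m (a :: w)).toFinset) := by
    rw [← List.take_of_length_le hlen.le, hperiodic k le_rfl, Nat.add_sub_cancel_left]
    simpa using Set.ordConnected_singleton
  refine ⟨fun h => ⟨hs, fun l hl2 hlk hint => ?_⟩, fun h => ⟨hs.nodup_blowUp,
    fun y hy => hs.mem_Icc_of_mem_blowUp hy, hfull, fun j hj1 hjk hper => ?_⟩⟩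
  · refine h.2.2.2 (k + 1 - l) (by omega) (by omega) ?_
    rw [hperiodic _ (by omega), show k + 1 - (k + 1 - l) = l by omega, hinterval l hlk.le]
    exact hint
  · rw [hlen] at hjk
    rw [hperiodic j hjk.le, hinterval _ (by omega)] at hper
    exact h.2 _ (by omega) (by omega) hper

lemma blowUp_injOn (k m : ℕ) : Set.InjOn (blowUp m) {s | IsPermList (k + 1) s} := by
  intro s hs t ht h
  obtain ⟨a, w, rfl⟩ := List.exists_cons_of_length_eq_add_one hs.1
  obtain ⟨b, v, rfl⟩ := List.exists_cons_of_length_eq_add_one ht.1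
  -- the letters missed by the common word form the block `collapse⁻¹' {a} = [a, a + m]`
  have hab : a = b := by
    have hset := coe_Icc_sdiff_take_blowUp (m := m) hs le_rfl
    rw [h, coe_Icc_sdiff_take_blowUp ht le_rfl, Nat.add_sub_cancel_left] at hset
    simp only [List.take_succ_cons, List.take_zero, List.toFinset_cons, List.toFinset_nil,
      insert_empty_eq, coe_singleton] at hset
    have hb : b ∈ collapse a m ⁻¹' {a} := hset ▸ by simp [collapse]
    have ha : a ∈ collapse b m ⁻¹' {b} := hset ▸ by simp [collapse]
    simp only [Set.mem_preimage, Set.mem_singleton_iff, collapse] at hb ha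
    omega
  subst hab
  simpa using List.map_injective_iff.2 expand_injective h

lemma exists_Icc_sdiff_eq_Icc_of_memD {k m : ℕ} (hm : k + 1 ≤ m) {u : List ℕ}
    (hu : u.length = k) (hD : MemD (k + 1 + m) u) :
    ∃ a, Icc 1 (k + 1 + m) \ u.toFinset = Icc a (a + m) := by
  obtain ⟨hnd, hmem, hper, -⟩ := hD
  have hsub : u.toFinset ⊆ Icc 1 (k + 1 + m) := fun x hx => hmem x (List.mem_toFinset.1 hx)
  have hcard : #(Icc 1 (k + 1 + m) \ u.toFinset) = m + 1 := by
    rw [card_sdiff_of_subset hsub, List.toFinset_card_of_nodup hnd, hu, Nat.card_Icc]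
    omega
  obtain ⟨a, ha⟩ :=
    ordConnected_coe_iff.1 ((periodicSet_iff_ordConnected sdiff_subset (by omega)).1 hper)
  exact ⟨a, by rwa [hcard, show a + (m + 1) - 1 = a + m by omega] at ha⟩

lemma exists_isPermList_blowUp_eq {k m : ℕ} (hm : k + 1 ≤ m) {u : List ℕ} (hu : u.length = k)
    (hD : MemD (k + 1 + m) u) : ∃ s, IsPermList (k + 1) s ∧ blowUp m s = u := by
  obtain ⟨a, ha⟩ := exists_Icc_sdiff_eq_Icc_of_memD hm hu hD
  obtain ⟨hnd, hmem, -⟩ := hD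
  have hau : ∀ y ∈ u, y < a ∨ a + m < y := fun y hy => by
    have : y ∉ Icc 1 (k + 1 + m) \ u.toFinset := by simp [hy]
    rw [ha, mem_Icc] at this
    omega
  have ha1 : 1 ≤ a ∧ a + m ≤ k + 1 + m := by
    have hlo : a ∈ Icc 1 (k + 1 + m) \ u.toFinset := ha ▸ left_mem_Icc.2 (by omega)
    have hhi : a + m ∈ Icc 1 (k + 1 + m) \ u.toFinset := ha ▸ right_mem_Icc.2 (by omega)
    simp only [mem_sdiff, mem_Icc] at hlo hhi
    omega
  have hcu : (u.map (collapse a m)).map (expand a m) = u := by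
    rw [List.map_map]
    exact List.map_congr_left (fun y hy => expand_collapse (hau y hy)) |>.trans (List.map_id' u)
  have hnd' : (a :: (u.map (collapse a m)).reverse).Nodup := by
    refine List.nodup_cons.2 ⟨fun h => ?_, List.nodup_reverse.2 (List.Nodup.of_map _ (hcu ▸ hnd))⟩
    obtain ⟨y, hy, hya⟩ := List.mem_map.1 (List.mem_reverse.1 h)
    have := hau y hy
    unfold collapse at hya
    omega
  refine ⟨_, ⟨by simp [hu], hnd', eq_of_subset_of_card_le (fun x hx => ?_) ?_⟩, by
    rw [blowUp, List.reverse_reverse, hcu]⟩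
  · simp only [List.toFinset_cons, List.toFinset_reverse, mem_insert, List.mem_toFinset,
      List.mem_map] at hx
    rcases hx with rfl | ⟨y, hy, rfl⟩
    · exact mem_Icc.2 (by omega)
    · have := mem_Icc.1 (hmem y hy)
      exact mem_Icc.2 (by unfold collapse; omega)
  · rw [List.toFinset_card_of_nodup hnd', Nat.card_Icc]
    simp [hu]

theorem stmt8_general (n k : ℕ) (hk : k < n / 2) :
    (∃ f : {u : List ℕ // u.length = k ∧ MemD n u} →
        {s : List ℕ // IsNonIntervalPerm (k + 1) s}, Function.Bijective f) ∧
    Nat.card {u : List ℕ | u.length = k ∧ MemD n u} =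
      Nat.card {s : List ℕ | IsNonIntervalPerm (k + 1) s} := by
  obtain ⟨m, rfl, hm⟩ : ∃ m, n = k + 1 + m ∧ k + 1 ≤ m := ⟨n - k - 1, by omega, by omega⟩
  let g : {s : List ℕ // IsNonIntervalPerm (k + 1) s} →
      {u : List ℕ // u.length = k ∧ MemD (k + 1 + m) u} := fun s =>
    ⟨blowUp m s, by simp [length_blowUp, s.2.1.1], (memD_blowUp_iff hm s.2.1).2 s.2⟩
  have hg : Function.Bijective g := by
    refine ⟨fun s t h => Subtype.ext (blowUp_injOn k m s.2.1 t.2.1 (congrArg Subtype.val h)),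
      fun u => ?_⟩
    obtain ⟨s, hs, hsu⟩ := exists_isPermList_blowUp_eq hm u.2.1 u.2.2
    exact ⟨⟨s, (memD_blowUp_iff hm hs).1 (hsu ▸ u.2.2)⟩, Subtype.ext hsu⟩
  let e := (Equiv.ofBijective g hg).symm
  exact ⟨⟨e, e.bijective⟩, Nat.card_congr e⟩

theorem stmt8 (n k : ℕ) (hk1 : 1 ≤ k) (hk : k < n / 2) :
    (∃ f : {u : List ℕ // u.length = k ∧ MemD n u} →
        {s : List ℕ // IsNonIntervalPerm (k + 1) s}, Function.Bijective f) ∧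
    Nat.card {u : List ℕ | u.length = k ∧ MemD n u} =
      Nat.card {s : List ℕ | IsNonIntervalPerm (k + 1) s} :=
  stmt8_general n k hk
end
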